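/- Main theorem: for any complete basis B = M ∪ {ω_1,…,ω_p} with all monotone functions of weight 0 and non-monotone ω_i of weight 1, setting r(B) = max_i d(ω_i) and c(B) = log₂(2r(B)+1) + 1, every finite system F of Boolean functions satisfies ⌈log₂(d(F)+1)⌉ − c(B) ≤ I_B(F) ≤ ⌈log₂(d(F)+1)⌉. -/

import Mathlib

/-!
Let `D x` be the largest number of drops of members of `F` along an increasing chain ending at
`x`. It is monotone, at most `d(F)`, and strictly increases across every drop.

Upper bound (Markov): a circuit computes the `s = ⌈log₂(d(F)+1)⌉` binary digits of `D x`, most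
significant first, each digit monotonically from `x` and the negations of the previous digits.
Only these `s` negations are non-monotone; each is a non-monotone basis function with all
arguments but one fixed to constants. Finally `f x = 1` iff some `z ≤ x` with `f z = 1` has
`D z ≥ D x`, which is monotone in `x` and the negated digits.

Lower bound: fixing the first non-monotone gate to either constant gives two circuits with one
non-monotone gate fewer. That gate is a basis function of monotone wires, so along a chain it
changes value at most `2r+1` times, and every other drop of a wire is a drop in one of the two
smaller circuits. Hence `d(F) + 2r + 1 ≤ (2r+1) 2^I`.
-/

open Classical in
/-- Number of jumps (1→0 drops of some member of `F`) between consecutive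
elements of a list of Boolean tuples. -/
noncomputable def jumps {k : ℕ} (F : Finset ((Fin k → Bool) → Bool)) :
    List (Fin k → Bool) → ℕ
  | a :: b :: t =>
      (if ∃ f ∈ F, f a = true ∧ f b = false then 1 else 0) + jumps F (b :: t)
  | _ => 0

/-- Number of value changes of `h` between consecutive elements of a list. -/
def changes {k : ℕ} (h : (Fin k → Bool) → Bool) :
    List (Fin k → Bool) → ℕ
  | a :: b :: t => (if h a ≠ h b then 1 else 0) + changes h (b :: t)
  | _ => 0

/-- An increasing chain of pairwise distinct tuples (coordinatewise order). -/
def IsIncChain {k : ℕ} (l : List (Fin k → Bool)) : Prop :=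
  l.Chain' (· ≤ ·) ∧ l.Pairwise (· ≠ ·)

/-- The decrease `d(F)` of a system of Boolean functions: the maximum number of
jumps over all increasing chains. -/
noncomputable def decrease {k : ℕ} (F : Finset ((Fin k → Bool) → Bool)) : ℕ :=
  sSup {m | ∃ l, IsIncChain l ∧ jumps F l = m}

/-- The decrease `d(f)` of a single Boolean function. -/
noncomputable def decrease1 {k : ℕ} (f : (Fin k → Bool) → Bool) : ℕ :=
  decrease {f}
/-- A Boolean circuit over the basis consisting of all monotone Boolean
functions (weight 0) together with the non-monotone basis functions from `Ω`
(weight 1).  Gate `i` may read the `n` inputs and all previous gate values. -/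
structure Circuit (n : ℕ) (Ω : Set (Σ m : ℕ, (Fin m → Bool) → Bool)) where
  size : ℕ
  gate : (i : Fin size) → ((Fin (n + i) → Bool) → Bool)
  nonmono : Finset (Fin size)
  mono_ok : ∀ i, i ∉ nonmono → Monotone (gate i)
  basis_ok : ∀ i ∈ nonmono, ∃ ω ∈ Ω, ∃ sel : Fin ω.1 → Fin (n + i),
      gate i = fun v => ω.2 (fun j => v (sel j))

/-- The value carried by wire `j` of the circuit (wires `0,…,n-1` are the
inputs, wire `n+i` is the output of gate `i`). -/
def Circuit.wire {n : ℕ} {Ω : Set (Σ m : ℕ, (Fin m → Bool) → Bool)}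
    (C : Circuit n Ω) (x : Fin n → Bool) (j : ℕ) : Bool :=
  if h : j < n then x ⟨j, h⟩
  else if h2 : j - n < C.size then
    C.gate ⟨j - n, h2⟩ (fun t => C.wire x t.val)
  else false
termination_by j
decreasing_by
  have ht := t.isLt
  simp only [not_lt] at h
  simp at ht
  omega

/-- The circuit `C` computes the system `F` if every member of `F` appears on
some wire of `C`. -/
def Circuit.Computes {n : ℕ} {Ω : Set (Σ m : ℕ, (Fin m → Bool) → Bool)}
    (C : Circuit n Ω) (F : Finset ((Fin n → Bool) → Bool)) : Prop :=
  ∀ f ∈ F, ∃ o : ℕ, o < n + C.size ∧ ∀ x, f x = C.wire x o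

/-- The inversion complexity `I_B(F)`: the minimal number of non-monotone
(weight-1) gates in a circuit over the basis computing the system `F`. -/
noncomputable def invCompl (n : ℕ) (Ω : Set (Σ m : ℕ, (Fin m → Bool) → Bool))
    (F : Finset ((Fin n → Bool) → Bool)) : ℕ :=
  sInf {k | ∃ C : Circuit n Ω, C.Computes F ∧ C.nonmono.card = k}

/-- The basis `{¬}`: negation as the unique weight-1 basis function. -/
def negBasis : Set (Σ m : ℕ, (Fin m → Bool) → Bool) :=
  {⟨1, fun v => !(v 0)⟩}

section Jumps

variable {k : ℕ}

lemma jumps_le_length (F : Finset ((Fin k → Bool) → Bool)) :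
    ∀ l, jumps F l ≤ l.length
  | a :: b :: t => by
    have := jumps_le_length F (b :: t)
    simp only [jumps, List.length_cons] at *
    split_ifs <;> omega
  | [] | [_] => by simp [jumps]

lemma jumps_mono {F G : Finset ((Fin k → Bool) → Bool)} (h : F ⊆ G) :
    ∀ l, jumps F l ≤ jumps G l
  | a :: b :: t => by
    have := jumps_mono h (b :: t)
    have hdrop : (∃ f ∈ F, f a = true ∧ f b = false) → ∃ f ∈ G, f a = true ∧ f b = false :=
      fun ⟨f, hf, hfab⟩ => ⟨f, h hf, hfab⟩
    simp only [jumps]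
    split_ifs with hF hG <;> first | omega | exact absurd (hdrop hF) hG
  | [] | [_] => by simp [jumps]

lemma jumps_le_add_add_changes {F G₁ G₂ : Finset ((Fin k → Bool) → Bool)}
    {h : (Fin k → Bool) → Bool}
    (hsplit : ∀ a b, (∃ f ∈ F, f a = true ∧ f b = false) →
      (∃ f ∈ G₁, f a = true ∧ f b = false) ∨ (∃ f ∈ G₂, f a = true ∧ f b = false) ∨
        h a ≠ h b) :
    ∀ l, jumps F l ≤ jumps G₁ l + jumps G₂ l + changes h l
  | a :: b :: t => by
    have := jumps_le_add_add_changes hsplit (b :: t)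
    have := hsplit a b
    simp only [jumps, changes]
    split_ifs <;> simp_all <;> omega
  | [] | [_] => by simp [jumps]

lemma changes_le_two_mul_jumps_add (h : (Fin k → Bool) → Bool) :
    ∀ a l, changes h (a :: l) ≤ 2 * jumps {h} (a :: l) + if h a then 0 else 1
  | a, b :: t => by
    have := changes_le_two_mul_jumps_add h b t
    simp only [jumps, changes, Finset.mem_singleton, exists_eq_left]
    cases ha : h a <;> cases hb : h b <;> simp [hb] at this ⊢ <;> omega
  | _, [] => by simp [changes]

lemma changes_le_two_mul_jumps_add_one (h : (Fin k → Bool) → Bool) :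
    ∀ l, changes h l ≤ 2 * jumps {h} l + 1
  | [] => by simp [changes]
  | a :: l => (changes_le_two_mul_jumps_add h a l).trans (by split_ifs <;> omega)

lemma jumps_comp {m : ℕ} (f : (Fin m → Bool) → Bool) (A : (Fin k → Bool) → Fin m → Bool) :
    ∀ l, jumps {fun x => f (A x)} l = jumps {f} (l.map A)
  | a :: b :: t => by
    have := jumps_comp f A (b :: t)
    simp_all [jumps]
  | [] | [_] => by simp [jumps]

lemma jumps_eq_zero_of_monotone {F : Finset ((Fin k → Bool) → Bool)}
    (hF : ∀ f ∈ F, Monotone f) : ∀ l, l.IsChain (· ≤ ·) → jumps F l = 0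
  | a :: b :: t, hl => by
    rw [List.isChain_cons_cons] at hl
    have hno : ¬ ∃ f ∈ F, f a = true ∧ f b = false := fun ⟨f, hf, ha, hb⟩ =>
      absurd (hF f hf hl.1) (by simp [ha, hb])
    simp only [jumps, if_neg hno, jumps_eq_zero_of_monotone hF _ hl.2]
  | [], _ | [_], _ => by simp [jumps]

lemma jumps_append_pair (F : Finset ((Fin k → Bool) → Bool)) (x y : Fin k → Bool) :
    ∀ l, jumps F (l ++ [x, y]) =
      jumps F (l ++ [x]) + if ∃ f ∈ F, f x = true ∧ f y = false then 1 else 0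
  | a :: b :: t => by
    have := jumps_append_pair F x y (b :: t)
    simp only [List.cons_append, jumps] at *
    omega
  | [a] => by simp [jumps]
  | [] => by simp [jumps]

lemma isIncChain_iff_isChain_lt {l : List (Fin k → Bool)} :
    IsIncChain l ↔ l.IsChain (· < ·) := by
  refine ⟨fun ⟨hle, hne⟩ => ?_, fun h => ⟨h.imp fun _ _ => le_of_lt, h.pairwise.imp ne_of_lt⟩⟩
  exact ((hle.pairwise.and hne).imp fun h => lt_of_le_of_ne h.1 h.2).isChain

lemma IsIncChain.append_singleton {l : List (Fin k → Bool)} {x y : Fin k → Bool}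
    (hl : IsIncChain (l ++ [x])) (hxy : x < y) : IsIncChain (l ++ [x, y]) := by
  rw [isIncChain_iff_isChain_lt] at *
  simpa using hl.append (List.isChain_singleton y) (by simpa using hxy)

lemma jumps_le_two_pow_of_isIncChain (F : Finset ((Fin k → Bool) → Bool))
    {l : List (Fin k → Bool)} (hl : IsIncChain l) : jumps F l ≤ 2 ^ k :=
  (jumps_le_length F l).trans <| by simpa using List.Nodup.length_le_card hl.2

lemma bddAbove_jumps (F : Finset ((Fin k → Bool) → Bool)) :
    BddAbove {m | ∃ l, IsIncChain l ∧ jumps F l = m} :=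
  ⟨2 ^ k, by rintro _ ⟨l, hl, rfl⟩; exact jumps_le_two_pow_of_isIncChain F hl⟩

noncomputable def decreaseTo (F : Finset ((Fin k → Bool) → Bool)) (x : Fin k → Bool) : ℕ :=
  sSup {m | ∃ l, IsIncChain (l ++ [x]) ∧ jumps F (l ++ [x]) = m}

lemma bddAbove_jumps_append_singleton (F : Finset ((Fin k → Bool) → Bool)) (x : Fin k → Bool) :
    BddAbove {m | ∃ l, IsIncChain (l ++ [x]) ∧ jumps F (l ++ [x]) = m} :=
  ⟨2 ^ k, by rintro _ ⟨l, hl, rfl⟩; exact jumps_le_two_pow_of_isIncChain F hl⟩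

lemma exists_jumps_eq_decrease (F : Finset ((Fin k → Bool) → Bool)) :
    ∃ l, IsIncChain l ∧ jumps F l = decrease F :=
  Nat.sSup_mem (s := {m | ∃ l, IsIncChain l ∧ jumps F l = m})
    ⟨_, [], isIncChain_iff_isChain_lt.mpr List.isChain_nil, rfl⟩ (bddAbove_jumps F)

lemma exists_jumps_eq_decreaseTo (F : Finset ((Fin k → Bool) → Bool)) (x : Fin k → Bool) :
    ∃ l, IsIncChain (l ++ [x]) ∧ jumps F (l ++ [x]) = decreaseTo F x :=
  Nat.sSup_mem (s := {m | ∃ l, IsIncChain (l ++ [x]) ∧ jumps F (l ++ [x]) = m})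
    ⟨_, [], isIncChain_iff_isChain_lt.mpr (List.isChain_singleton x), rfl⟩
    (bddAbove_jumps_append_singleton F x)

lemma jumps_le_decreaseTo {F : Finset ((Fin k → Bool) → Bool)} {l : List (Fin k → Bool)}
    {x : Fin k → Bool} (hl : IsIncChain (l ++ [x])) : jumps F (l ++ [x]) ≤ decreaseTo F x :=
  le_csSup (bddAbove_jumps_append_singleton F x) ⟨l, hl, rfl⟩

lemma decreaseTo_le_decrease (F : Finset ((Fin k → Bool) → Bool)) (x : Fin k → Bool) :
    decreaseTo F x ≤ decrease F := by
  obtain ⟨l, hl, hjumps⟩ := exists_jumps_eq_decreaseTo F x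
  rw [← hjumps]
  exact le_csSup (bddAbove_jumps F) ⟨_, hl, rfl⟩

lemma decreaseTo_add_le {F : Finset ((Fin k → Bool) → Bool)} {x y : Fin k → Bool}
    (hxy : x ≤ y) :
    decreaseTo F x + (if ∃ f ∈ F, f x = true ∧ f y = false then 1 else 0) ≤ decreaseTo F y := by
  obtain rfl | hne := eq_or_ne x y
  · simp
  obtain ⟨l, hl, hjumps⟩ := exists_jumps_eq_decreaseTo F x
  have hext := hl.append_singleton (lt_of_le_of_ne hxy hne)
  rw [← hjumps, ← jumps_append_pair]
  simpa using jumps_le_decreaseTo (l := l ++ [x]) (by simpa using hext)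

lemma decreaseTo_mono (F : Finset ((Fin k → Bool) → Bool)) : Monotone (decreaseTo F) :=
  fun _ _ hxy => (Nat.le_add_right _ _).trans (decreaseTo_add_le hxy)

lemma decreaseTo_lt {F : Finset ((Fin k → Bool) → Bool)} {f : (Fin k → Bool) → Bool}
    (hf : f ∈ F) {x y : Fin k → Bool} (hxy : x ≤ y) (hx : f x = true) (hy : f y = false) :
    decreaseTo F x < decreaseTo F y := by
  simpa [if_pos (⟨f, hf, hx, hy⟩ : ∃ f ∈ F, f x = true ∧ f y = false)]
    using decreaseTo_add_le (F := F) hxy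

lemma jumps_add_decreaseTo_le (F : Finset ((Fin k → Bool) → Bool)) :
    ∀ a l, (a :: l).IsChain (· ≤ ·) → jumps F (a :: l) + decreaseTo F a ≤ decrease F
  | a, [], _ => by simpa [jumps] using decreaseTo_le_decrease F a
  | a, b :: t, hl => by
    rw [List.isChain_cons_cons] at hl
    have := jumps_add_decreaseTo_le F b t hl.2
    have := decreaseTo_add_le (F := F) hl.1
    simp only [jumps]
    omega

/-- The chain may repeat elements: `decreaseTo F` serves as a potential along it. -/
lemma jumps_le_decrease (F : Finset ((Fin k → Bool) → Bool)) :
    ∀ l : List (Fin k → Bool), l.IsChain (· ≤ ·) → jumps F l ≤ decrease F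
  | [], _ => by simp [jumps]
  | a :: l, hl => (Nat.le_add_right _ _).trans (jumps_add_decreaseTo_le F a l hl)

end Jumps

namespace Circuit

variable {n : ℕ} {Ω : Set (Σ m : ℕ, (Fin m → Bool) → Bool)}

lemma wire_of_lt (C : Circuit n Ω) (x : Fin n → Bool) {j : ℕ} (hj : j < n) :
    C.wire x j = x ⟨j, hj⟩ := by
  rw [wire, dif_pos hj]

lemma wire_add (C : Circuit n Ω) (x : Fin n → Bool) (i : Fin C.size) :
    C.wire x (n + i) = C.gate i fun t => C.wire x t := by
  have hgate : ∀ i' : Fin C.size, i' = i →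
      (C.gate i' fun t => C.wire x t) = C.gate i fun t => C.wire x t := by
    rintro _ rfl; rfl
  rw [wire, dif_neg (by omega), dif_pos (by simp)]
  exact hgate _ (Fin.ext (by simp))

lemma wire_of_le (C : Circuit n Ω) (x : Fin n → Bool) {j : ℕ} (hj : n + C.size ≤ j) :
    C.wire x j = false := by
  rw [wire, dif_neg (by omega), dif_neg (by omega)]

lemma monotone_wire_of_lt (C : Circuit n Ω) {g : ℕ}
    (hg : ∀ i : Fin C.size, i.val < g → Monotone (C.gate i)) :
    ∀ j < n + g, Monotone fun x => C.wire x j := by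
  intro j
  induction j using Nat.strong_induction_on with
  | _ j ih =>
    intro hj x y hxy
    by_cases hjn : j < n
    · simpa [wire_of_lt _ _ hjn] using hxy ⟨j, hjn⟩
    by_cases hjs : j < n + C.size
    · obtain ⟨i, rfl⟩ : ∃ i : Fin C.size, j = n + i := ⟨⟨j - n, by omega⟩, by simp; omega⟩
      simp only [wire_add]
      exact hg i (by omega) fun t => ih t (by omega) (by omega) hxy
    · simp [wire_of_le _ _ (not_lt.mp hjs)]

lemma monotone_wire (C : Circuit n Ω) (hC : C.nonmono = ∅) (j : ℕ) :
    Monotone fun x => C.wire x j := by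
  by_cases hj : j < n + C.size
  · exact C.monotone_wire_of_lt (fun i _ => C.mono_ok i (by simp [hC])) j hj
  · simpa [wire_of_le _ _ (not_lt.mp hj)] using monotone_const

def substConst (C : Circuit n Ω) (g : Fin C.size) (b : Bool) : Circuit n Ω where
  size := C.size
  gate i := if i = g then fun _ => b else C.gate i
  nonmono := C.nonmono.erase g
  mono_ok i hi := by
    by_cases h : i = g
    · simp [h, monotone_const]
    · simpa [h] using C.mono_ok i (by simpa [h] using hi)
  basis_ok i hi := by
    simpa [(Finset.mem_erase.mp hi).1] using C.basis_ok i (Finset.mem_of_mem_erase hi)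

lemma wire_substConst (C : Circuit n Ω) (g : Fin C.size) {x : Fin n → Bool}
    {b : Bool} (hb : C.wire x (n + g) = b) (j : ℕ) : (C.substConst g b).wire x j = C.wire x j := by
  induction j using Nat.strong_induction_on with
  | _ j ih =>
    by_cases hjn : j < n
    · simp [wire_of_lt _ _ hjn]
    by_cases hjs : j < n + C.size
    · obtain ⟨i, rfl⟩ : ∃ i : Fin C.size, j = n + i := ⟨⟨j - n, by omega⟩, by simp; omega⟩
      rw [wire_add (C.substConst g b) x i, wire_add]
      by_cases hig : i = g
      · subst hig
        simp [substConst, ← hb, wire_add]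
      · simp only [substConst, if_neg hig]
        congr 1
        exact funext fun t => ih t (by omega)
    · rw [wire_of_le _ _ (by simpa [substConst] using hjs), wire_of_le _ _ (by omega)]

def wireFuns (C : Circuit n Ω) : Finset ((Fin n → Bool) → Bool) :=
  (Finset.range (n + C.size)).image fun o x => C.wire x o

lemma subset_wireFuns {C : Circuit n Ω} {F : Finset ((Fin n → Bool) → Bool)}
    (hC : C.Computes F) : F ⊆ C.wireFuns := fun f hf => by
  obtain ⟨o, ho, hfo⟩ := hC f hf
  exact Finset.mem_image.mpr ⟨o, Finset.mem_range.mpr ho, funext fun x => (hfo x).symm⟩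

lemma drop_substConst (C : Circuit n Ω) (g : Fin C.size) {a b : Fin n → Bool}
    (hab : C.wire a (n + g) = C.wire b (n + g))
    (hdrop : ∃ f ∈ C.wireFuns, f a = true ∧ f b = false) :
    ∃ f ∈ (C.substConst g (C.wire a (n + g))).wireFuns, f a = true ∧ f b = false := by
  obtain ⟨_, hf, ha, hb⟩ := hdrop
  obtain ⟨o, ho, rfl⟩ := Finset.mem_image.mp hf
  refine ⟨fun x => (C.substConst g (C.wire a (n + g))).wire x o,
    Finset.mem_image.mpr ⟨o, ho, rfl⟩, ?_, ?_⟩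
  · simpa [wire_substConst C g rfl] using ha
  · simpa [wire_substConst C g hab.symm] using hb

end Circuit

section LowerBound

variable {n : ℕ} {Ω : Set (Σ m : ℕ, (Fin m → Bool) → Bool)} {r : ℕ}

lemma Circuit.changes_wire_le (hr : ∀ ω ∈ Ω, decrease1 ω.2 ≤ r) (C : Circuit n Ω)
    {g : Fin C.size} (hg : g ∈ C.nonmono)
    (hbelow : ∀ i : Fin C.size, i.val < g.val → Monotone (C.gate i))
    {l : List (Fin n → Bool)} (hl : l.IsChain (· ≤ ·)) :
    changes (fun x => C.wire x (n + g)) l ≤ 2 * r + 1 := by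
  obtain ⟨ω, hω, sel, hgate⟩ := C.basis_ok g hg
  set A : (Fin n → Bool) → Fin ω.1 → Bool := fun x j => C.wire x (sel j)
  have hA : Monotone A := fun x y hxy j =>
    C.monotone_wire_of_lt hbelow (sel j) (sel j).isLt hxy
  have hwire : (fun x => C.wire x (n + g)) = fun x => ω.2 (A x) := by
    funext x
    rw [C.wire_add, hgate]
  have hjumps : jumps {fun x => C.wire x (n + g)} l ≤ r := by
    rw [hwire, jumps_comp]
    exact (jumps_le_decrease _ _
      (List.isChain_map_of_isChain A (fun _ _ h => hA h) hl)).trans (hr ω hω)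
  have := changes_le_two_mul_jumps_add_one (fun x => C.wire x (n + g)) l
  omega

lemma Circuit.jumps_wireFuns_add_le (hr : ∀ ω ∈ Ω, decrease1 ω.2 ≤ r) (C : Circuit n Ω)
    {l : List (Fin n → Bool)} (hl : l.IsChain (· ≤ ·)) :
    jumps C.wireFuns l + (2 * r + 1) ≤ (2 * r + 1) * 2 ^ C.nonmono.card := by
  induction hK : C.nonmono.card generalizing C with
  | zero =>
    have hmono : ∀ f ∈ C.wireFuns, Monotone f := by
      intro f hf
      obtain ⟨o, -, rfl⟩ := Finset.mem_image.mp hf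
      exact C.monotone_wire (Finset.card_eq_zero.mp hK) o
    simp [jumps_eq_zero_of_monotone hmono l hl]
  | succ K ih =>
    have hne : C.nonmono.Nonempty := Finset.card_pos.mp (by omega)
    obtain ⟨g, hg, hmin⟩ : ∃ g ∈ C.nonmono, ∀ i ∈ C.nonmono, g ≤ i :=
      ⟨_, C.nonmono.min'_mem hne, fun i hi => C.nonmono.min'_le i hi⟩
    have hbelow : ∀ i : Fin C.size, i.val < g.val → Monotone (C.gate i) := fun i hi =>
      C.mono_ok i fun hmem => (Fin.lt_def.mpr hi).not_ge (hmin i hmem)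
    have hcard : ∀ b, (C.substConst g b).nonmono.card = K := fun b => by
      rw [Circuit.substConst, Finset.card_erase_of_mem hg, hK, Nat.add_sub_cancel]
    have hsplit : jumps C.wireFuns l ≤ jumps (C.substConst g false).wireFuns l +
        jumps (C.substConst g true).wireFuns l + changes (fun x => C.wire x (n + g)) l := by
      refine jumps_le_add_add_changes (fun a b hdrop => ?_) l
      by_cases hab : C.wire a (n + g) = C.wire b (n + g)
      · have hdrop' := C.drop_substConst g hab hdrop
        cases ha : C.wire a (n + g)
        · exact Or.inl (ha ▸ hdrop')
        · exact Or.inr (Or.inl (ha ▸ hdrop'))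
      · exact Or.inr (Or.inr hab)
    have := C.changes_wire_le hr hg hbelow hl
    have := ih _ (hcard false)
    have := ih _ (hcard true)
    have : (2 * r + 1) * 2 ^ (K + 1) = 2 * ((2 * r + 1) * 2 ^ K) := by ring
    omega

lemma decrease_add_le_of_computes (hr : ∀ ω ∈ Ω, decrease1 ω.2 ≤ r) {C : Circuit n Ω}
    {F : Finset ((Fin n → Bool) → Bool)} (hC : C.Computes F) :
    decrease F + (2 * r + 1) ≤ (2 * r + 1) * 2 ^ C.nonmono.card := by
  obtain ⟨l, hl, hjumps⟩ := exists_jumps_eq_decrease F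
  rw [← hjumps]
  exact (Nat.add_le_add_right (jumps_mono (Circuit.subset_wireFuns hC) l) _).trans
    (C.jumps_wireFuns_add_le hr hl.1)

end LowerBound

/-- A maximal point below `b` where `f` is still `true` sits next to a point where it is
`false`. -/
lemma exists_update_eq_not {ι : Type*} [Fintype ι] [DecidableEq ι] {f : (ι → Bool) → Bool}
    (hf : ¬ Monotone f) : ∃ (w : ι → Bool) (c : ι), ∀ b, f (Function.update w c b) = !b := by
  classical
  obtain ⟨a, b, hab, hfab⟩ : ∃ a b, a ≤ b ∧ ¬ f a ≤ f b := by simpa [Monotone] using hf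
  obtain ⟨hfa, hfb⟩ : f a = true ∧ f b = false := by
    revert hfab; cases f a <;> cases f b <;> simp
  obtain ⟨w, hw⟩ := (Finset.univ.filter fun w => w ≤ b ∧ f w = true).exists_maximal
    ⟨a, by simp [hab, hfa]⟩
  simp only [Finset.mem_filter, Finset.mem_univ, true_and] at hw
  obtain ⟨⟨hwb, hfw⟩, hmax⟩ := hw
  obtain ⟨c, hc⟩ := Function.ne_iff.mp (fun h : w = b => by simp [h, hfb] at hfw)
  obtain ⟨hwc, hbc⟩ : w c = false ∧ b c = true := by
    have := hwb c; revert hc this; cases w c <;> cases b c <;> simp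
  refine ⟨w, c, fun β => ?_⟩
  cases β
  · rw [← hwc, Function.update_eq_self, hfw, hwc]; rfl
  · by_contra hne
    have hle : Function.update w c true ≤ b := by
      intro i
      rcases eq_or_ne i c with rfl | hi
      · simp [hbc]
      · simpa [hi] using hwb i
    have hwle : w ≤ Function.update w c true := by
      intro i
      rcases eq_or_ne i c with rfl | hi <;> simp [*]
    exact absurd (hmax ⟨hle, by simpa using hne⟩ hwle c) (by simp [hwc])

/-- The leading `t` of `s` binary digits of `m`, computed greedily (most significant first). -/
def binPrefix (s m : ℕ) : ℕ → ℕ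
  | 0 => 0
  | t + 1 => binPrefix s m t +
      if binPrefix s m t + 2 ^ (s - 1 - t) ≤ m then 2 ^ (s - 1 - t) else 0

def binDigit (s m t : ℕ) : Bool := decide (binPrefix s m t + 2 ^ (s - 1 - t) ≤ m)

lemma binPrefix_succ (s m t : ℕ) :
    binPrefix s m (t + 1) = binPrefix s m t + if binDigit s m t then 2 ^ (s - 1 - t) else 0 := by
  simp [binPrefix, binDigit]

lemma binPrefix_le_lt {s m : ℕ} (hm : m < 2 ^ s) :
    ∀ t ≤ s, binPrefix s m t ≤ m ∧ m < binPrefix s m t + 2 ^ (s - t)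
  | 0, _ => by simpa [binPrefix] using hm
  | t + 1, ht => by
    have := binPrefix_le_lt hm t (by omega)
    have hpow : 2 ^ (s - t) = 2 * 2 ^ (s - 1 - t) := by
      rw [← pow_succ']; congr 1; omega
    rw [binPrefix, show s - (t + 1) = s - 1 - t by omega]
    split_ifs <;> omega

lemma binPrefix_self {s m : ℕ} (hm : m < 2 ^ s) : binPrefix s m s = m := by
  have := binPrefix_le_lt hm s le_rfl
  simp only [Nat.sub_self, pow_zero] at this
  omega

def padFalse {k : ℕ} (v : Fin k → Bool) (j : ℕ) : Bool :=
  if h : j < k then v ⟨j, h⟩ else false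

lemma padFalse_of_lt {k j : ℕ} (v : Fin k → Bool) (h : j < k) : padFalse v j = v ⟨j, h⟩ :=
  dif_pos h

lemma padFalse_mono {k : ℕ} : Monotone (padFalse (k := k)) := fun v v' hv j => by
  unfold padFalse
  split_ifs
  exacts [hv _, le_rfl]

section Markov

variable (n : ℕ)

/-- The number whose leading `t` of `s` binary digits are the negations of the values on the
wires `n + 3 + 2 t'`, `t' < t`. -/
def readPrefix (s t : ℕ) (u : ℕ → Bool) : ℕ :=
  ∑ t' ∈ Finset.range t, if u (n + (3 + 2 * t')) then 0 else 2 ^ (s - 1 - t')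

def digitGate (s t : ℕ) (D : (Fin n → Bool) → ℕ) (u : ℕ → Bool) : Bool :=
  decide (readPrefix n s t u + 2 ^ (s - 1 - t) ≤ D fun k => u k)

open Classical in
noncomputable def outputGate (s : ℕ) (D : (Fin n → Bool) → ℕ) (f : (Fin n → Bool) → Bool)
    (u : ℕ → Bool) : Bool :=
  decide (∃ z, z ≤ (fun k : Fin n => u k) ∧ f z = true ∧ readPrefix n s s u ≤ D z)

variable {n}

lemma readPrefix_antitone (s t : ℕ) : Antitone (readPrefix n s t) := fun u u' hu =>
  Finset.sum_le_sum fun t' _ => by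
    have := hu (n + (3 + 2 * t'))
    revert this
    cases u (n + (3 + 2 * t')) <;> cases u' (n + (3 + 2 * t')) <;> simp

lemma readPrefix_eq {s m : ℕ} {u : ℕ → Bool} :
    ∀ {t}, (∀ t' < t, u (n + (3 + 2 * t')) = !binDigit s m t') →
      readPrefix n s t u = binPrefix s m t
  | 0, _ => by simp [readPrefix, binPrefix]
  | t + 1, hu => by
    rw [readPrefix, Finset.sum_range_succ, ← readPrefix,
      readPrefix_eq fun t' ht' => hu t' (by omega), binPrefix_succ, hu t (by omega)]
    cases binDigit s m t <;> rfl

lemma digitGate_mono {s t : ℕ} {D : (Fin n → Bool) → ℕ} (hD : Monotone D) :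
    Monotone (digitGate n s t D) := fun u u' hu => by
  simp only [digitGate, Bool.le_iff_imp, decide_eq_true_eq]
  exact fun h => (Nat.add_le_add_right (readPrefix_antitone s t hu) _).trans
    (h.trans (hD fun k => hu k))

lemma outputGate_mono {s : ℕ} {D : (Fin n → Bool) → ℕ} {f : (Fin n → Bool) → Bool} :
    Monotone (outputGate n s D f) := fun u u' hu => by
  simp only [outputGate, Bool.le_iff_imp, decide_eq_true_eq]
  exact fun ⟨z, hz, hfz, hDz⟩ =>
    ⟨z, hz.trans fun k => hu k, hfz, (readPrefix_antitone s s hu).trans hDz⟩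

lemma digitGate_eq {s t : ℕ} {D : (Fin n → Bool) → ℕ} {u : ℕ → Bool} {x : Fin n → Bool}
    (hx : (fun k : Fin n => u k) = x)
    (hu : ∀ t' < t, u (n + (3 + 2 * t')) = !binDigit s (D x) t') :
    digitGate n s t D u = binDigit s (D x) t := by
  rw [digitGate, binDigit, readPrefix_eq hu, hx]

lemma outputGate_eq {s : ℕ} {D : (Fin n → Bool) → ℕ} {f : (Fin n → Bool) → Bool}
    {u : ℕ → Bool} {x : Fin n → Bool} (hDx : D x < 2 ^ s)
    (hdrop : ∀ z ≤ x, f z = true → f x = false → D z < D x)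
    (hx : (fun k : Fin n => u k) = x)
    (hu : ∀ t' < s, u (n + (3 + 2 * t')) = !binDigit s (D x) t') :
    outputGate n s D f u = f x := by
  rw [outputGate, readPrefix_eq hu, binPrefix_self hDx, hx]
  cases hfx : f x
  · simpa using fun z hz hfz => hdrop z hz hfz hfx
  · simpa using ⟨x, le_rfl, hfx, le_rfl⟩

end Markov

section MarkovCircuit

variable {n : ℕ} {Ω : Set (Σ m : ℕ, (Fin m → Bool) → Bool)} {ω : Σ m : ℕ, (Fin m → Bool) → Bool}

/-- Markov's circuit. Gates `0` and `1` are the constants `false` and `true`; gate `2 + 2 t`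
(`t < s`) computes the `t`-th binary digit of `D x`, most significant first, and gate `3 + 2 t`
its negation, as `ω` with argument `c` reading that digit and the others fixed to `w`; gate
`2 + 2 s + u` computes the `u`-th member of `fs`. -/
noncomputable def markovCircuit (s : ℕ) {D : (Fin n → Bool) → ℕ} (hD : Monotone D)
    (fs : List ((Fin n → Bool) → Bool)) (hω : ω ∈ Ω) (w : Fin ω.1 → Bool) (c : Fin ω.1) :
    Circuit n Ω where
  size := 2 + 2 * s + fs.length
  gate i :=
    if h₀ : i.val < 2 then fun _ => decide (i.val = 1)
    else if h₁ : i.val < 2 + 2 * s then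
      if i.val % 2 = 0 then fun v => digitGate n s ((i.val - 2) / 2) D (padFalse v)
      else fun v => ω.2 fun j => v <|
        if j = c then ⟨n + i - 1, by omega⟩ else if w j then ⟨n + 1, by omega⟩ else ⟨n, by omega⟩
    else fun v => outputGate n s D (fs.get ⟨i.val - (2 + 2 * s), by omega⟩) (padFalse v)
  nonmono := Finset.univ.image fun t : Fin s => ⟨3 + 2 * t, by omega⟩
  mono_ok i hi := by
    by_cases h₀ : i.val < 2
    · simp only [h₀, dite_true]
      exact monotone_const
    by_cases h₁ : i.val < 2 + 2 * s
    · have hpar : i.val % 2 = 0 := by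
        by_contra hodd
        exact hi (Finset.mem_image.mpr ⟨⟨(i.val - 3) / 2, by omega⟩, Finset.mem_univ _,
          Fin.ext (by simp; omega)⟩)
      simp only [h₀, h₁, hpar, dite_false, dite_true, if_true]
      exact (digitGate_mono hD).comp padFalse_mono
    · simp only [h₀, h₁, dite_false]
      exact outputGate_mono.comp padFalse_mono
  basis_ok i hi := by
    obtain ⟨t, -, hit⟩ := Finset.mem_image.mp hi
    have hi : i.val = 3 + 2 * t := by rw [← hit]
    refine ⟨ω, hω, fun j => if j = c then ⟨n + i - 1, by omega⟩
      else if w j then ⟨n + 1, by omega⟩ else ⟨n, by omega⟩, ?_⟩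
    rw [dif_neg (by omega), dif_pos (by omega), if_neg (by omega)]

variable {s : ℕ} {D : (Fin n → Bool) → ℕ} {hD : Monotone D} {fs : List ((Fin n → Bool) → Bool)}
  {hω : ω ∈ Ω} {w : Fin ω.1 → Bool} {c : Fin ω.1} (x : Fin n → Bool)

local notation "M" => markovCircuit s hD fs hω w c

lemma markovCircuit_card : (M).nonmono.card = s := by
  rw [markovCircuit, Finset.card_image_of_injective _ fun t t' h => by
    simp only [Fin.mk.injEq] at h; exact Fin.ext (by omega)]
  simp

lemma markovCircuit_wire_false : (M).wire x n = false :=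
  ((M).wire_add x ⟨0, by simp only [markovCircuit]; omega⟩).trans (by simp [markovCircuit])

lemma markovCircuit_wire_true : (M).wire x (n + 1) = true :=
  ((M).wire_add x ⟨1, by simp only [markovCircuit]; omega⟩).trans (by simp [markovCircuit])

lemma markovCircuit_wire_digit {t : ℕ} (ht : t < s) :
    (M).wire x (n + (2 + 2 * t)) =
      digitGate n s t D (padFalse fun j : Fin (n + (2 + 2 * t)) => (M).wire x j) := by
  refine ((M).wire_add x ⟨2 + 2 * t, by simp only [markovCircuit]; omega⟩).trans ?_
  simp only [markovCircuit]
  rw [dif_neg (by omega), dif_pos (by omega), if_pos (by omega)]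
  congr 1
  omega

lemma markovCircuit_wire_neg {t : ℕ} (ht : t < s) :
    (M).wire x (n + (3 + 2 * t)) = ω.2 fun j =>
      if j = c then (M).wire x (n + (2 + 2 * t))
      else if w j then (M).wire x (n + 1) else (M).wire x n := by
  refine ((M).wire_add x ⟨3 + 2 * t, by simp only [markovCircuit]; omega⟩).trans ?_
  simp only [markovCircuit]
  rw [dif_neg (by omega), dif_pos (by omega), if_neg (by omega)]
  refine congrArg ω.2 (funext fun j => ?_)
  split_ifs
  · exact congrArg _ (show n + (3 + 2 * t) - 1 = n + (2 + 2 * t) by omega)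
  · rfl
  · rfl

lemma markovCircuit_wire_output {u : ℕ} (hu : u < fs.length) :
    (M).wire x (n + (2 + 2 * s + u)) =
      outputGate n s D fs[u] (padFalse fun j : Fin (n + (2 + 2 * s + u)) => (M).wire x j) := by
  refine ((M).wire_add x ⟨2 + 2 * s + u, by simp only [markovCircuit]; omega⟩).trans ?_
  simp only [markovCircuit]
  rw [dif_neg (by omega), dif_neg (by omega)]
  congr
  omega

lemma markovCircuit_wire_digit_eq (hneg : ∀ b, ω.2 (Function.update w c b) = !b) :
    ∀ t < s, (M).wire x (n + (2 + 2 * t)) = binDigit s (D x) t ∧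
      (M).wire x (n + (3 + 2 * t)) = !binDigit s (D x) t := by
  intro t
  induction t using Nat.strong_induction_on with
  | _ t ih =>
    intro ht
    have hdigit : (M).wire x (n + (2 + 2 * t)) = binDigit s (D x) t := by
      rw [markovCircuit_wire_digit x ht]
      refine digitGate_eq ?_ fun t' ht' => ?_
      · funext k
        rw [padFalse_of_lt _ (by omega), (M).wire_of_lt x k.isLt]
      · rw [padFalse_of_lt _ (by omega)]
        exact (ih t' ht' (by omega)).2
    refine ⟨hdigit, ?_⟩
    rw [markovCircuit_wire_neg x ht, ← hneg (binDigit s (D x) t)]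
    refine congrArg ω.2 (funext fun j => ?_)
    rw [hdigit, markovCircuit_wire_true, markovCircuit_wire_false, Function.update_apply]
    split_ifs <;> simp_all

lemma markovCircuit_wire_output_eq (hneg : ∀ b, ω.2 (Function.update w c b) = !b)
    (hDx : D x < 2 ^ s) {u : ℕ} (hu : u < fs.length)
    (hdrop : ∀ z ≤ x, fs[u] z = true → fs[u] x = false → D z < D x) :
    (M).wire x (n + (2 + 2 * s + u)) = fs[u] x := by
  rw [markovCircuit_wire_output x hu]
  refine outputGate_eq hDx hdrop ?_ fun t' ht' => ?_
  · funext k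
    rw [padFalse_of_lt _ (by omega), (M).wire_of_lt x k.isLt]
  · rw [padFalse_of_lt _ (by omega)]
    exact (markovCircuit_wire_digit_eq x hneg t' ht').2

lemma markovCircuit_computes (hneg : ∀ b, ω.2 (Function.update w c b) = !b)
    (hDlt : ∀ x, D x < 2 ^ s) {F : Finset ((Fin n → Bool) → Bool)} (hF : ∀ f ∈ F, f ∈ fs)
    (hdrop : ∀ f ∈ F, ∀ z x, z ≤ x → f z = true → f x = false → D z < D x) :
    (M).Computes F := by
  intro f hf
  obtain ⟨u, hu, rfl⟩ := List.getElem_of_mem (hF f hf)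
  exact ⟨n + (2 + 2 * s + u), by simp only [markovCircuit]; omega, fun x =>
    (markovCircuit_wire_output_eq x hneg (hDlt x) hu (hdrop _ hf · x)).symm⟩

end MarkovCircuit

lemma exists_circuit_card_eq_clog {n : ℕ} {Ω : Set (Σ m : ℕ, (Fin m → Bool) → Bool)}
    (hne : Ω.Nonempty) (hnm : ∀ ω ∈ Ω, ¬ Monotone ω.2) (F : Finset ((Fin n → Bool) → Bool)) :
    ∃ C : Circuit n Ω, C.Computes F ∧ C.nonmono.card = Nat.clog 2 (decrease F + 1) := by
  obtain ⟨ω, hω⟩ := hne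
  obtain ⟨w, c, hneg⟩ := exists_update_eq_not (hnm ω hω)
  have hDlt : ∀ x, decreaseTo F x < 2 ^ Nat.clog 2 (decrease F + 1) := fun x =>
    (decreaseTo_le_decrease F x).trans_lt (Nat.le_pow_clog one_lt_two _)
  exact ⟨markovCircuit _ (decreaseTo_mono F) F.toList hω w c,
    markovCircuit_computes hneg hDlt (fun _ => Finset.mem_toList.mpr)
      fun _ hf _ _ => decreaseTo_lt hf, markovCircuit_card⟩

lemma ceil_logb_two_natCast_add_one (d : ℕ) :
    ⌈Real.logb 2 ((d : ℝ) + 1)⌉ = Nat.clog 2 (d + 1) := by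
  rw [← Int.clog_natCast (R := ℝ), ← Real.ceil_logb_natCast (by positivity)]
  push_cast
  rfl

lemma ceil_logb_two_sub_le {d r K : ℕ} (h : d + (2 * r + 1) ≤ (2 * r + 1) * 2 ^ K) :
    (⌈Real.logb 2 ((d : ℝ) + 1)⌉ : ℝ) - (Real.logb 2 (2 * (r : ℝ) + 1) + 1) ≤ K := by
  have hd : (d : ℝ) + 1 ≤ (2 * r + 1) * 2 ^ K := by exact_mod_cast (by omega : d + 1 ≤ _)
  have hlog : Real.logb 2 ((d : ℝ) + 1) ≤ Real.logb 2 (2 * r + 1) + K := by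
    calc Real.logb 2 ((d : ℝ) + 1) ≤ Real.logb 2 ((2 * r + 1) * 2 ^ K) :=
          Real.logb_le_logb_of_le one_lt_two (by positivity) hd
      _ = Real.logb 2 (2 * r + 1) + K := by
          rw [Real.logb_mul (by positivity) (by positivity), Real.logb_pow,
            Real.logb_self_eq_one one_lt_two, mul_one]
  linarith [Int.ceil_lt_add_one (Real.logb 2 ((d : ℝ) + 1))]

theorem stmt16_general (n : ℕ) (Ω : Set (Σ m : ℕ, (Fin m → Bool) → Bool))
    (hne : Ω.Nonempty)
    (hnm : ∀ ω ∈ Ω, ¬ Monotone ω.2)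
    (r : ℕ) (hr : ∀ ω ∈ Ω, decrease1 ω.2 ≤ r)
    (F : Finset ((Fin n → Bool) → Bool)) :
    (⌈Real.logb 2 ((decrease F : ℝ) + 1)⌉ : ℝ)
        - (Real.logb 2 (2 * (r : ℝ) + 1) + 1) ≤ (invCompl n Ω F : ℝ) ∧
    (invCompl n Ω F : ℝ) ≤ (⌈Real.logb 2 ((decrease F : ℝ) + 1)⌉ : ℝ) := by
  obtain ⟨C₀, hC₀, hcard₀⟩ := exists_circuit_card_eq_clog hne hnm F
  have hmem : Nat.clog 2 (decrease F + 1) ∈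
      {k | ∃ C : Circuit n Ω, C.Computes F ∧ C.nonmono.card = k} := ⟨C₀, hC₀, hcard₀⟩
  obtain ⟨C, hC, hcard⟩ := Nat.sInf_mem ⟨_, hmem⟩
  refine ⟨?_, ?_⟩
  · have hd := decrease_add_le_of_computes hr hC
    rw [hcard] at hd
    exact ceil_logb_two_sub_le hd
  · rw [ceil_logb_two_natCast_add_one]
    exact_mod_cast Nat.sInf_le hmem

/-- main theorem: for any basis `B = M ∪ Ω` with `Ω` a finite
nonempty set of non-monotone functions, setting `r = max_{ω ∈ Ω} d(ω)` and
`c(B) = log₂(2r+1) + 1`, every system `F` satisfies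
`⌈log₂(d(F)+1)⌉ − c(B) ≤ I_B(F) ≤ ⌈log₂(d(F)+1)⌉`. -/
theorem stmt16 (n : ℕ) (Ω : Set (Σ m : ℕ, (Fin m → Bool) → Bool))
    (hfin : Ω.Finite) (hne : Ω.Nonempty)
    (hnm : ∀ ω ∈ Ω, ¬ Monotone ω.2)
    (r : ℕ) (hr : ∀ ω ∈ Ω, decrease1 ω.2 ≤ r)
    (hrmax : ∃ ω ∈ Ω, decrease1 ω.2 = r)
    (F : Finset ((Fin n → Bool) → Bool)) :
    (⌈Real.logb 2 ((decrease F : ℝ) + 1)⌉ : ℝ)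
        - (Real.logb 2 (2 * (r : ℝ) + 1) + 1) ≤ (invCompl n Ω F : ℝ) ∧
    (invCompl n Ω F : ℝ) ≤ (⌈Real.logb 2 ((decrease F : ℝ) + 1)⌉ : ℝ) :=
  stmt16_general n Ω hne hnm r hr F
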